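/- Let (X,𝔅,μ,T) be a measure-preserving system, α a finite measurable partition of X, and 0 < τ < D̲^p_μ(T,α) (the supremum of lower dimensions D̲(S) over positive entropy sequences S of α). Then there exist an increasing sequence F = {f_1 < f_2 < ⋯} of positive integers and a real number d > 0 such that D̄(F) ≥ τ and for all integers 1 ≤ m_1 ≤ m_2, H_μ(⋁_{i=m_1}^{m_2} T^{−f_i}α) ≥ (m_2 + 1 − m_1)·d. In particular F is an entropy generating sequence of α. -/

import Mathlib

open MeasureTheory Filter Set
open scoped ENNReal symmDiff

noncomputable section

namespace EntDim

/-- An increasing sequence of positive integers `S = {s 0 < s 1 < ⋯}` (0-indexed,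
so `s n` is the `(n+1)`-st element of `S`). -/
def IsPosSeq (s : ℕ → ℕ) : Prop := StrictMono s ∧ 0 < s 0

/-- `D̄(S,τ) = limsup_n n / (s_n)^τ` (with the convention that the `n`-th term,
for `n` starting at `0`, is `(n+1)/(s n)^τ`, matching the 1-indexed definition). -/
def dimExprSup (s : ℕ → ℕ) (τ : ℝ) : ℝ≥0∞ :=
  Filter.atTop.limsup fun n : ℕ => ((n : ℝ≥0∞) + 1) / (s n : ℝ≥0∞) ^ τ

/-- `D̲(S,τ) = liminf_n n / (s_n)^τ`. -/
def dimExprInf (s : ℕ → ℕ) (τ : ℝ) : ℝ≥0∞ :=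
  Filter.atTop.liminf fun n : ℕ => ((n : ℝ≥0∞) + 1) / (s n : ℝ≥0∞) ^ τ

/-- The upper dimension `D̄(S) = inf {τ ≥ 0 | D̄(S,τ) = 0}` of a sequence. -/
def upperDim (s : ℕ → ℕ) : ℝ := sInf {τ : ℝ | 0 ≤ τ ∧ dimExprSup s τ = 0}

/-- The lower dimension `D̲(S) = inf {τ ≥ 0 | D̲(S,τ) = 0}` of a sequence. -/
def lowerDim (s : ℕ → ℕ) : ℝ := sInf {τ : ℝ | 0 ≤ τ ∧ dimExprInf s τ = 0}

variable {X : Type*} [MeasurableSpace X]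

/-- `P : ι → Set X` is a finite measurable partition of `X`. -/
def IsPartition {ι : Type*} [Fintype ι] (P : ι → Set X) : Prop :=
  (∀ i, MeasurableSet (P i)) ∧ Pairwise (Function.onFun Disjoint P) ∧ (⋃ i, P i) = Set.univ

/-- The entropy `H_μ(⋁_{i ∈ F} T^{-f i} P)` of the join of the preimage partitions
`T^{-f i} P` over a finite index set `F`. -/
def finJoinEnt (μ : Measure X) (T : X → X) {ι : Type*} [Fintype ι] (P : ι → Set X)
    (f : ℕ → ℕ) (F : Finset ℕ) : ℝ :=
  ∑ ω : F → ι, Real.negMulLog (μ (⋂ i : F, T^[f i.1] ⁻¹' (P (ω i)))).toReal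

/-- `H_μ(⋁_{i=1}^{n} T^{-s_i} P)` (with `s` 0-indexed: this is the join over the
first `n` elements of the sequence). -/
def seqJoinEnt (μ : Measure X) (T : X → X) {ι : Type*} [Fintype ι] (P : ι → Set X)
    (s : ℕ → ℕ) (n : ℕ) : ℝ :=
  finJoinEnt μ T P s (Finset.range n)

/-- `S` is an entropy generating sequence of the partition `P`:
`liminf_n (1/n) H_μ(⋁_{i=1}^n T^{-s_i} P) > 0`. -/
def IsEntGenSeq (μ : Measure X) (T : X → X) {ι : Type*} [Fintype ι] (P : ι → Set X)
    (s : ℕ → ℕ) : Prop :=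
  IsPosSeq s ∧ 0 < Filter.atTop.liminf fun n : ℕ => seqJoinEnt μ T P s n / n

/-- `S` is a positive entropy sequence of the partition `P`:
`limsup_n (1/n) H_μ(⋁_{i=1}^n T^{-s_i} P) > 0`. -/
def IsPosEntSeq (μ : Measure X) (T : X → X) {ι : Type*} [Fintype ι] (P : ι → Set X)
    (s : ℕ → ℕ) : Prop :=
  IsPosSeq s ∧ 0 < Filter.atTop.limsup fun n : ℕ => seqJoinEnt μ T P s n / n

/-- `D̄^e_μ(T,P)`: the supremum of upper dimensions over entropy generating sequences
of `P` (`0`, by convention `sSup ∅ = 0`, if there are none). This is the upper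
entropy dimension `D̄_μ(T,P)` of the partition `P`. -/
def upperEntDimPart (μ : Measure X) (T : X → X) {ι : Type*} [Fintype ι]
    (P : ι → Set X) : ℝ :=
  sSup {d : ℝ | ∃ s : ℕ → ℕ, IsEntGenSeq μ T P s ∧ d = upperDim s}

/-- `D̲^e_μ(T,P)`: the supremum of lower dimensions over entropy generating sequences,
i.e. the lower entropy dimension `D̲_μ(T,P)` of the partition `P`. -/
def lowerEntDimPart (μ : Measure X) (T : X → X) {ι : Type*} [Fintype ι]
    (P : ι → Set X) : ℝ :=
  sSup {d : ℝ | ∃ s : ℕ → ℕ, IsEntGenSeq μ T P s ∧ d = lowerDim s}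

/-- `D̄^p_μ(T,P)`: the supremum of upper dimensions over positive entropy sequences of `P`. -/
def upperPosDimPart (μ : Measure X) (T : X → X) {ι : Type*} [Fintype ι]
    (P : ι → Set X) : ℝ :=
  sSup {d : ℝ | ∃ s : ℕ → ℕ, IsPosEntSeq μ T P s ∧ d = upperDim s}

/-- `D̲^p_μ(T,P)`: the supremum of lower dimensions over positive entropy sequences of `P`. -/
def lowerPosDimPart (μ : Measure X) (T : X → X) {ι : Type*} [Fintype ι]
    (P : ι → Set X) : ℝ :=
  sSup {d : ℝ | ∃ s : ℕ → ℕ, IsPosEntSeq μ T P s ∧ d = lowerDim s}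

/-- The upper metric entropy dimension `D̄_μ(X,T)`: the supremum of `D̄_μ(T,P)`
over all finite measurable partitions `P` of `X`. -/
def upperEntDim (μ : Measure X) (T : X → X) : ℝ :=
  sSup {d : ℝ | ∃ (k : ℕ) (P : Fin k → Set X), IsPartition P ∧ d = upperEntDimPart μ T P}

/-- The lower metric entropy dimension `D̲_μ(X,T)`. -/
def lowerEntDim (μ : Measure X) (T : X → X) : ℝ :=
  sSup {d : ℝ | ∃ (k : ℕ) (P : Fin k → Set X), IsPartition P ∧ d = lowerEntDimPart μ T P}

/-- `D̄^p_μ(X,T)`: the supremum of `D̄^p_μ(T,P)` over all finite measurable partitions. -/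
def upperPosDim (μ : Measure X) (T : X → X) : ℝ :=
  sSup {d : ℝ | ∃ (k : ℕ) (P : Fin k → Set X), IsPartition P ∧ d = upperPosDimPart μ T P}

/-- The two-set partition `{A, X \ A}`. -/
def pairPart (A : Set X) : Fin 2 → Set X := ![A, Aᶜ]

/-- The dimension set `Dims_μ(X,T) = {D̄_μ(T,{A,Aᶜ}) : A ∈ 𝔅, 0 < μ(A) < 1}`. -/
def dimsSet (μ : Measure X) (T : X → X) : Set ℝ :=
  {d : ℝ | ∃ A : Set X, MeasurableSet A ∧ 0 < μ A ∧ μ A < 1 ∧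
    d = upperEntDimPart μ T (pairPart A)}

/-- The system is null: every sequence entropy (along any increasing sequence of
positive integers, for any finite measurable partition) vanishes. -/
def IsNullSystem (μ : Measure X) (T : X → X) : Prop :=
  ∀ (k : ℕ) (P : Fin k → Set X), IsPartition P → ∀ s : ℕ → ℕ, IsPosSeq s →
    Filter.atTop.limsup (fun n : ℕ => seqJoinEnt μ T P s n / n) = 0

end EntDim

/-!
Choose a positive entropy sequence `s` with `τ < D̲(s)` and put `R j = T^{-s_j} α`. The
conditional entropies `b j = H(R j | R 0 ∨ ⋯ ∨ R (j-1))` are at most `log |α|` and sum to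
`H(R 0 ∨ ⋯ ∨ R (n-1))`, which is `≥ c n` for infinitely many `n`; hence the set `E` of indices
with `b j ≥ c/2` has positive upper density. Since conditioning on more partitions can only
decrease entropy, the join of any `m` of the `R j` with `j ∈ E` has entropy `≥ m c/2`, so
`F = s ∘ (enumeration of E)` has the required block bounds. Finally, positive upper density of
`E` means that `F` is not much sparser than `s` infinitely often, which turns `D̲(s) > τ` into
`D̄(F) ≥ τ`.
-/

namespace EntDim

open Finset
open Real (negMulLog log log_inv log_pow log_natCast_nonneg concaveOn_negMulLog negMulLog_mul
  negMulLog_nonneg)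

section NegMulLog

lemma sum_negMulLog_le_log_card {ι : Type*} [Fintype ι] {q : ι → ℝ} (hq0 : ∀ a, 0 ≤ q a)
    (hq1 : ∑ a, q a = 1) : ∑ a, negMulLog (q a) ≤ log (Fintype.card ι) := by
  have hk : (0 : ℝ) < Fintype.card ι := by
    have : Nonempty ι := by
      by_contra h
      simp [not_nonempty_iff.1 h] at hq1
    exact_mod_cast Fintype.card_pos
  have hjensen := concaveOn_negMulLog.le_map_sum (t := univ)
    (w := fun _ => (Fintype.card ι : ℝ)⁻¹) (p := q) (fun _ _ => by positivity)
    (by simp [hk.ne']) (fun a _ => hq0 a)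
  simp only [smul_eq_mul, ← mul_sum, hq1, mul_one, negMulLog, log_inv] at hjensen
  field_simp at hjensen
  simpa [negMulLog] using hjensen

lemma sum_negMulLog_sub_negMulLog_eq {ι : Type*} [Fintype ι] {p : ℝ} {r : ι → ℝ}
    (hr : ∀ a, 0 ≤ r a) (hsum : ∑ a, r a = p) :
    ∑ a, negMulLog (r a) - negMulLog p = ∑ a, p * negMulLog (r a / p) := by
  rcases eq_or_ne p 0 with rfl | hp
  · have : ∀ a, r a = 0 := fun a =>
      (sum_eq_zero_iff_of_nonneg fun a _ => hr a).1 hsum a (mem_univ a)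
    simp [this]
  have hsplit : ∀ a, negMulLog (r a) = r a / p * negMulLog p + p * negMulLog (r a / p) :=
    fun a => by rw [← negMulLog_mul, mul_div_cancel₀ _ hp]
  simp only [hsplit, sum_add_distrib, ← sum_mul, ← sum_div, hsum, div_self hp, one_mul,
    add_sub_cancel_left]

-- The log-sum inequality, i.e. Jensen's inequality for the perspective of `negMulLog`.
lemma sum_mul_negMulLog_div_le {κ : Type*} (t : Finset κ) {p r : κ → ℝ}
    (hr : ∀ c ∈ t, 0 ≤ r c) (hrp : ∀ c ∈ t, r c ≤ p c) :
    ∑ c ∈ t, p c * negMulLog (r c / p c) ≤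
      (∑ c ∈ t, p c) * negMulLog ((∑ c ∈ t, r c) / ∑ c ∈ t, p c) := by
  have hp : ∀ c ∈ t, 0 ≤ p c := fun c hc => (hr c hc).trans (hrp c hc)
  set P := ∑ c ∈ t, p c
  rcases (sum_nonneg hp).eq_or_lt with hP | hP
  · have : ∀ c ∈ t, p c = 0 := (sum_eq_zero_iff_of_nonneg hp).1 hP.symm
    simp +contextual [this, P]
  have hweights : ∀ c ∈ t, p c / P * (r c / p c) = r c / P := by
    intro c hc
    rcases (hp c hc).eq_or_lt with h0 | h0
    · simp [← h0, le_antisymm (h0 ▸ hrp c hc) (hr c hc)]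
    · field_simp
  have hjensen := concaveOn_negMulLog.le_map_sum (t := t) (w := fun c => p c / P)
    (p := fun c => r c / p c) (fun c hc => div_nonneg (hp c hc) hP.le)
    (by rw [← sum_div, div_self hP.ne']) (fun c hc => div_nonneg (hr c hc) (hp c hc))
  simp only [smul_eq_mul, sum_congr rfl hweights, ← sum_div] at hjensen
  calc ∑ c ∈ t, p c * negMulLog (r c / p c)
      = P * ∑ c ∈ t, p c / P * negMulLog (r c / p c) := by
        rw [mul_sum]
        exact sum_congr rfl fun c _ => by rw [← mul_assoc, mul_div_cancel₀ _ hP.ne']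
    _ ≤ P * negMulLog ((∑ c ∈ t, r c) / P) := by gcongr

end NegMulLog

section Join

def joinAtom {X ι : Type*} (R : ℕ → ι → Set X) (F : Finset ℕ) (ω : F → ι) : Set X :=
  ⋂ i : F, R i (ω i)

lemma joinAtom_subset_restrict₂ {X ι : Type*} {R : ℕ → ι → Set X} {C C' : Finset ℕ}
    (h : C ⊆ C') (ω : C' → ι) :
    joinAtom R C' ω ⊆ joinAtom R C (Finset.restrict₂ (π := fun _ => ι) h ω) :=
  Set.subset_iInter fun i => Set.iInter_subset _ (⟨i, h i.2⟩ : C')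

variable {X : Type*} [MeasurableSpace X] {ι : Type*} [Fintype ι]

-- `H_μ(⋁_{i ∈ F} R i)`; `finJoinEnt μ T P f F` is the case `R i = T^{-f i} P`.
def joinEnt (μ : Measure X) (R : ℕ → ι → Set X) (F : Finset ℕ) : ℝ :=
  ∑ ω : F → ι, negMulLog (μ (joinAtom R F ω)).toReal

lemma IsPartition.preimage {Y : Type*} [MeasurableSpace Y] {Q : ι → Set X}
    (hQ : IsPartition Q) {g : Y → X} (hg : Measurable g) : IsPartition fun a => g ⁻¹' Q a :=
  ⟨fun a => hg (hQ.1 a), fun _ _ h => (hQ.2.1 h).preimage g, by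
    rw [← Set.preimage_iUnion, hQ.2.2, Set.preimage_univ]⟩

lemma IsPartition.sum_measure_inter (μ : Measure X) {Q : ι → Set X} (hQ : IsPartition Q)
    {A : Set X} (hA : MeasurableSet A) : ∑ a, μ (A ∩ Q a) = μ A := by
  rw [← tsum_fintype (L := .unconditional _), ← measure_iUnion
    (fun _ _ h => (hQ.2.1 h).mono Set.inter_subset_right Set.inter_subset_right)
    (fun a => hA.inter (hQ.1 a)), ← Set.inter_iUnion, hQ.2.2, Set.inter_univ]

lemma IsPartition.sum_negMulLog_measure_le (μ : Measure X) [IsProbabilityMeasure μ]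
    {Q : ι → Set X} (hQ : IsPartition Q) :
    ∑ a, negMulLog (μ (Q a)).toReal ≤ log (Fintype.card ι) := by
  refine sum_negMulLog_le_log_card (fun _ => ENNReal.toReal_nonneg) ?_
  rw [← ENNReal.toReal_sum (fun _ _ => measure_ne_top μ _)]
  simpa using congrArg ENNReal.toReal (hQ.sum_measure_inter μ MeasurableSet.univ)

variable {R : ℕ → ι → Set X}

lemma isPartition_joinAtom (hR : ∀ j, IsPartition (R j)) (F : Finset ℕ) :
    IsPartition (joinAtom R F) := by
  refine ⟨fun ω => MeasurableSet.iInter fun i => (hR i).1 (ω i), fun ω ω' hne => ?_, ?_⟩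
  · obtain ⟨i, hi⟩ := Function.ne_iff.1 hne
    exact ((hR i).2.1 hi).mono (Set.iInter_subset _ i) (Set.iInter_subset _ i)
  · refine Set.eq_univ_of_forall fun x => Set.mem_iUnion.2 ?_
    have hcover : ∀ j, ∃ a, x ∈ R j a := fun j =>
      Set.mem_iUnion.1 ((hR j).2.2.symm ▸ Set.mem_univ x)
    choose ω hω using hcover
    exact ⟨fun i => ω i, Set.mem_iInter.2 fun i => hω i⟩

lemma measure_joinAtom_inter_eq_sum [DecidableEq ι] (μ : Measure X)
    (hR : ∀ j, IsPartition (R j)) {C C' : Finset ℕ} (h : C ⊆ C') (ρ : C → ι) {S : Set X}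
    (hS : MeasurableSet S) :
    μ (joinAtom R C ρ ∩ S) =
      ∑ ω with Finset.restrict₂ (π := fun _ => ι) h ω = ρ, μ (joinAtom R C' ω ∩ S) := by
  have hpiece : ∀ ω, joinAtom R C ρ ∩ S ∩ joinAtom R C' ω =
      if Finset.restrict₂ (π := fun _ => ι) h ω = ρ then joinAtom R C' ω ∩ S else ∅ := by
    intro ω
    split_ifs with hω
    · rw [← hω, Set.inter_comm _ S, Set.inter_assoc,
        Set.inter_eq_right.2 (joinAtom_subset_restrict₂ h ω), Set.inter_comm]
    · exact Set.disjoint_iff_inter_eq_empty.1 <|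
        ((isPartition_joinAtom hR C).2.1 (Ne.symm hω)).mono Set.inter_subset_left
          (joinAtom_subset_restrict₂ h ω)
  rw [← (isPartition_joinAtom hR C').sum_measure_inter μ
    (((isPartition_joinAtom hR C).1 ρ).inter hS), sum_filter]
  exact sum_congr rfl fun ω _ => by rw [hpiece]; split_ifs <;> simp

lemma joinEnt_nonneg (μ : Measure X) [IsProbabilityMeasure μ] (R : ℕ → ι → Set X)
    (F : Finset ℕ) : 0 ≤ joinEnt μ R F :=
  sum_nonneg fun _ _ => negMulLog_nonneg ENNReal.toReal_nonneg
    (ENNReal.toReal_le_of_le_ofReal zero_le_one (by simpa using prob_le_one))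

lemma joinEnt_empty (μ : Measure X) [IsProbabilityMeasure μ] (R : ℕ → ι → Set X) :
    joinEnt μ R ∅ = 0 := by
  simp [joinEnt, joinAtom]

lemma joinEnt_le_card_mul_log (μ : Measure X) [IsProbabilityMeasure μ]
    (hR : ∀ j, IsPartition (R j)) (F : Finset ℕ) :
    joinEnt μ R F ≤ F.card * log (Fintype.card ι) := by
  have := (isPartition_joinAtom hR F).sum_negMulLog_measure_le μ
  rwa [Fintype.card_fun, Fintype.card_coe, Nat.cast_pow, log_pow] at this

lemma joinEnt_insert (μ : Measure X) (R : ℕ → ι → Set X) {j : ℕ} {C : Finset ℕ}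
    (hj : j ∉ C) :
    joinEnt μ R (insert j C) =
      ∑ ρ : C → ι, ∑ a, negMulLog (μ (joinAtom R C ρ ∩ R j a)).toReal := by
  let e : (↥(insert j C) → ι) ≃ ι × (C → ι) :=
    ((Finset.subtypeInsertEquivOption hj).arrowCongr (Equiv.refl ι)).trans Equiv.piOptionEquivProd
  rw [joinEnt, ← e.symm.sum_comp, Fintype.sum_prod_type_right]
  refine sum_congr rfl fun ρ _ => sum_congr rfl fun a _ => ?_
  rw [joinAtom, ← (Finset.subtypeInsertEquivOption hj).symm.surjective.iInter_comp,
    Set.iInter_option, Set.inter_comm]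
  simp only [e, Equiv.piOptionEquivProd, Equiv.symm_trans, Equiv.symm_mk,
    Equiv.arrowCongr_symm, Equiv.refl_symm, Equiv.trans_apply, Equiv.coe_fn_mk,
    Equiv.arrowCongr_apply, Equiv.coe_refl, Equiv.symm_symm, Function.comp_apply,
    Equiv.apply_symm_apply, id_eq]
  rfl

lemma joinEnt_map (μ : Measure X) (R : ℕ → ι → Set X) (e : ℕ ↪ ℕ) (A : Finset ℕ) :
    joinEnt μ R (A.map e) = joinEnt μ (fun i => R (e i)) A := by
  refine Fintype.sum_equiv ((A.equivMap e).arrowCongr (Equiv.refl ι)).symm _ _ fun ω => ?_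
  rw [joinAtom, joinAtom, ← (A.equivMap e).surjective.iInter_comp]
  simp

-- `H_μ(Q | ⋁_{i ∈ C} R i)`, as the `μ`-average over the atoms `A` of the join of the
-- entropy of `Q` under `μ(· | A)`.
def condEnt (μ : Measure X) {κ : Type*} [Fintype κ] (Q : κ → Set X) (R : ℕ → ι → Set X)
    (C : Finset ℕ) : ℝ :=
  ∑ ρ : C → ι, ∑ a, (μ (joinAtom R C ρ)).toReal *
    negMulLog ((μ (joinAtom R C ρ ∩ Q a)).toReal / (μ (joinAtom R C ρ)).toReal)

lemma joinEnt_insert_sub_joinEnt (μ : Measure X) [IsFiniteMeasure μ]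
    (hR : ∀ j, IsPartition (R j)) {j : ℕ} {C : Finset ℕ} (hj : j ∉ C) :
    joinEnt μ R (insert j C) - joinEnt μ R C = condEnt μ (R j) R C := by
  rw [joinEnt_insert μ R hj, joinEnt, condEnt, ← sum_sub_distrib]
  refine sum_congr rfl fun ρ _ => sum_negMulLog_sub_negMulLog_eq
    (fun _ => ENNReal.toReal_nonneg) ?_
  rw [← ENNReal.toReal_sum fun _ _ => measure_ne_top μ _,
    (hR j).sum_measure_inter μ ((isPartition_joinAtom hR C).1 ρ)]

lemma condEnt_anti [DecidableEq ι] (μ : Measure X) [IsFiniteMeasure μ]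
    (hR : ∀ j, IsPartition (R j)) {κ : Type*} [Fintype κ] {Q : κ → Set X}
    (hQ : ∀ a, MeasurableSet (Q a)) {C C' : Finset ℕ} (h : C ⊆ C') :
    condEnt μ Q R C' ≤ condEnt μ Q R C := by
  have hfiber : ∀ (ρ : C → ι) {S : Set X}, MeasurableSet S →
      ∑ ω with Finset.restrict₂ (π := fun _ => ι) h ω = ρ, (μ (joinAtom R C' ω ∩ S)).toReal =
        (μ (joinAtom R C ρ ∩ S)).toReal := fun ρ S hS => by
    rw [measure_joinAtom_inter_eq_sum μ hR h ρ hS,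
      ENNReal.toReal_sum fun _ _ => measure_ne_top μ _]
  have hfiber_univ : ∀ ρ : C → ι,
      ∑ ω with Finset.restrict₂ (π := fun _ => ι) h ω = ρ, (μ (joinAtom R C' ω)).toReal =
        (μ (joinAtom R C ρ)).toReal := fun ρ => by
    simpa only [Set.inter_univ] using hfiber ρ MeasurableSet.univ
  rw [condEnt, ← sum_fiberwise univ (Finset.restrict₂ (π := fun _ => ι) h)]
  refine sum_le_sum fun ρ _ => ?_
  rw [sum_comm]
  refine sum_le_sum fun a _ => ?_
  have := sum_mul_negMulLog_div_le {ω | Finset.restrict₂ (π := fun _ => ι) h ω = ρ}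
    (p := fun ω => (μ (joinAtom R C' ω)).toReal)
    (r := fun ω => (μ (joinAtom R C' ω ∩ Q a)).toReal) (fun _ _ => ENNReal.toReal_nonneg)
    (fun _ _ => ENNReal.toReal_mono (measure_ne_top _ _) (measure_mono Set.inter_subset_left))
  rwa [hfiber ρ (hQ a), hfiber_univ ρ] at this

lemma condEnt_le_log_card [DecidableEq ι] (μ : Measure X) [IsProbabilityMeasure μ]
    (hR : ∀ j, IsPartition (R j)) {κ : Type*} [Fintype κ] {Q : κ → Set X}
    (hQ : IsPartition Q) (C : Finset ℕ) : condEnt μ Q R C ≤ log (Fintype.card κ) := by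
  refine (condEnt_anti μ hR hQ.1 (empty_subset C)).trans ?_
  have hatom : ∀ ρ, joinAtom R ∅ ρ = Set.univ := fun ρ => Set.iInter_of_empty _
  simpa [condEnt, hatom] using hQ.sum_negMulLog_measure_le μ

lemma sum_condEnt_range (μ : Measure X) [IsProbabilityMeasure μ]
    (hR : ∀ j, IsPartition (R j)) (n : ℕ) :
    ∑ j ∈ range n, condEnt μ (R j) R (range j) = joinEnt μ R (range n) := by
  induction n with
  | zero => simp [joinEnt_empty]
  | succ n ih =>
    rw [sum_range_succ, ih, ← joinEnt_insert_sub_joinEnt μ hR notMem_range_self,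
      range_add_one, add_sub_cancel]

lemma sum_condEnt_le_joinEnt [DecidableEq ι] (μ : Measure X) [IsProbabilityMeasure μ]
    (hR : ∀ j, IsPartition (R j)) (A : Finset ℕ) :
    ∑ j ∈ A, condEnt μ (R j) R (range j) ≤ joinEnt μ R A := by
  induction A using Finset.induction_on_max with
  | empty => simpa using joinEnt_nonneg μ R ∅
  | insert j A hlt ih =>
    have hj : j ∉ A := fun h => lt_irrefl j (hlt j h)
    have hA : A ⊆ range j := fun i hi => mem_range.2 (hlt i hi)
    rw [sum_insert hj, ← sub_add_cancel (joinEnt μ R (insert j A)) (joinEnt μ R A),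
      joinEnt_insert_sub_joinEnt μ hR hj]
    exact add_le_add (condEnt_anti μ hR (hR j).1 hA) ih

lemma card_mul_le_joinEnt_comp [DecidableEq ι] (μ : Measure X) [IsProbabilityMeasure μ]
    (hR : ∀ j, IsPartition (R j)) {e : ℕ → ℕ} (he : StrictMono e) {c : ℝ}
    (hc : ∀ i, c ≤ condEnt μ (R (e i)) R (range (e i))) (A : Finset ℕ) :
    A.card * c ≤ joinEnt μ (fun i => R (e i)) A := by
  let e' : ℕ ↪ ℕ := ⟨e, he.injective⟩
  calc A.card * c ≤ ∑ i ∈ A, condEnt μ (R (e i)) R (range (e i)) := by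
        simpa [mul_comm] using card_nsmul_le_sum A _ c fun i _ => hc i
    _ = ∑ j ∈ A.map e', condEnt μ (R j) R (range j) :=
        (sum_map A e' fun j => condEnt μ (R j) R (range j)).symm
    _ ≤ joinEnt μ R (A.map e') := sum_condEnt_le_joinEnt μ hR _
    _ = joinEnt μ (fun i => R (e i)) A := joinEnt_map μ R e' A

end Join

section Sequences

lemma exists_frequently_mul_le_of_limsup_pos {u : ℕ → ℝ} (hu : ∀ n, 0 ≤ u n)
    (h : 0 < atTop.limsup fun n : ℕ => u n / n) :
    ∃ c > 0, ∃ᶠ n : ℕ in atTop, c * n ≤ u n := by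
  refine ⟨_, half_pos h, (frequently_lt_of_lt_limsup
    (isCoboundedUnder_le_of_le atTop fun n => div_nonneg (hu n) n.cast_nonneg)
    (half_lt_self h)).mono fun n hn => ?_⟩
  rcases n.eq_zero_or_pos with rfl | hn0
  · simpa using hu 0
  · exact ((lt_div_iff₀ (Nat.cast_pos.2 hn0)).1 hn).le

lemma exists_frequently_le_mul_count {b : ℕ → ℝ} {L c : ℝ} (hb : ∀ j, b j ≤ L) (hc : 0 < c)
    (h : ∃ᶠ n : ℕ in atTop, c * n ≤ ∑ j ∈ range n, b j) :
    ∃ K : ℕ, ∃ᶠ n : ℕ in atTop, n ≤ K * Nat.count (fun j => c / 2 ≤ b j) n := by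
  refine ⟨⌈2 * L / c⌉₊, h.mono fun n hn => ?_⟩
  set m := Nat.count (fun j => c / 2 ≤ b j) n with hm
  have hsplit : ∑ j ∈ range n, b j ≤ m * L + n * (c / 2) := by
    rw [← sum_filter_add_sum_filter_not (range n) (fun j => c / 2 ≤ b j),
      hm, Nat.count_eq_card_filter_range]
    refine add_le_add ?_ ?_
    · simpa using sum_le_card_nsmul _ _ _ fun j _ => hb j
    · refine (sum_le_card_nsmul _ _ _ fun j hj => (not_le.1 (mem_filter.1 hj).2).le).trans ?_
      simpa using mul_le_mul_of_nonneg_right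
        ((card_filter_le _ _).trans (card_range n).le |> Nat.cast_le.2) (half_pos hc).le
  have hn' : (n : ℝ) ≤ 2 * L / c * m := by
    rw [div_mul_eq_mul_div, le_div_iff₀ hc]
    nlinarith
  exact_mod_cast hn'.trans (mul_le_mul_of_nonneg_right (Nat.le_ceil _) m.cast_nonneg)

lemma infinite_of_frequently_le_mul_count {p : ℕ → Prop} [DecidablePred p] {K : ℕ}
    (h : ∃ᶠ n : ℕ in atTop, n ≤ K * Nat.count p n) : (Set.ofPred p).Infinite := by
  intro hfin
  obtain ⟨n, hn, hlt⟩ := (h.and_eventually (eventually_gt_atTop (K * #hfin.toFinset))).exists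
  exact (hn.trans (Nat.mul_le_mul_left K (Nat.count_le_card hfin n))).not_gt hlt

lemma IsPosSeq.comp_strictMono {s e : ℕ → ℕ} (hs : IsPosSeq s) (he : StrictMono e) :
    IsPosSeq (s ∘ e) :=
  ⟨hs.1.comp he, hs.2.trans_le (hs.1.monotone (Nat.zero_le _))⟩

lemma IsPosSeq.add_one_le {s : ℕ → ℕ} (hs : IsPosSeq s) (n : ℕ) : n + 1 ≤ s n := by
  induction n with
  | zero => exact hs.2
  | succ n ih => exact ih.trans_lt (hs.1 n.lt_succ_self)

lemma IsPosSeq.dimExprSup_two {s : ℕ → ℕ} (hs : IsPosSeq s) : dimExprSup s 2 = 0 := by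
  have hbound : ∀ n : ℕ, ((n : ℝ≥0∞) + 1) / (s n : ℝ≥0∞) ^ (2 : ℝ) ≤ (s n : ℝ≥0∞)⁻¹ := by
    intro n
    have hs0 : (s n : ℝ≥0∞) ≠ 0 := Nat.cast_ne_zero.2 (n.succ_pos.trans_le (hs.add_one_le n)).ne'
    calc ((n : ℝ≥0∞) + 1) / (s n : ℝ≥0∞) ^ (2 : ℝ) ≤ (s n : ℝ≥0∞) / (s n : ℝ≥0∞) ^ 2 := by
          rw [ENNReal.rpow_two]
          gcongr
          exact_mod_cast hs.add_one_le n
      _ = (s n : ℝ≥0∞)⁻¹ := by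
          rw [pow_two, ENNReal.div_eq_inv_mul, ENNReal.mul_inv (by simp) (by simp), mul_assoc,
            ENNReal.inv_mul_cancel hs0 (by simp), mul_one]
  exact (tendsto_of_tendsto_of_tendsto_of_le_of_le tendsto_const_nhds
    (ENNReal.tendsto_inv_nat_nhds_zero.comp hs.1.tendsto_atTop) (fun _ => zero_le)
    hbound).limsup_eq

lemma add_one_div_rpow_le_mul_count {s : ℕ → ℕ} (hs : StrictMono s) {p : ℕ → Prop}
    [DecidablePred p] {K n : ℕ} (hn : 1 ≤ n) (hnK : n ≤ K * Nat.count p n) {τ : ℝ}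
    (hτ : 0 ≤ τ) :
    ((n : ℝ≥0∞) + 1) / (s n : ℝ≥0∞) ^ τ ≤
      2 * K * ((((Nat.count p n - 1 : ℕ) : ℝ≥0∞) + 1) /
        (s (Nat.nth p (Nat.count p n - 1)) : ℝ≥0∞) ^ τ) := by
  set m := Nat.count p n
  have hm : 1 ≤ m := Nat.pos_of_ne_zero fun h => by simp [h] at hnK; omega
  have hnum : n + 1 ≤ 2 * K * m := by linarith
  have hden : s (Nat.nth p (m - 1)) ≤ s n :=
    hs.monotone (Nat.nth_lt_of_lt_count (by omega)).le
  rw [← mul_div_assoc, show ((m - 1 : ℕ) : ℝ≥0∞) + 1 = m by norm_cast; omega]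
  exact ENNReal.div_le_div (by exact_mod_cast hnum)
    (ENNReal.rpow_le_rpow (by exact_mod_cast hden) hτ)

lemma lowerDim_le_upperDim_comp_nth {s : ℕ → ℕ} (hs : IsPosSeq s) {p : ℕ → Prop}
    [DecidablePred p] {K : ℕ} (hK : ∃ᶠ n : ℕ in atTop, n ≤ K * Nat.count p n) :
    lowerDim s ≤ upperDim (s ∘ Nat.nth p) := by
  have hp := infinite_of_frequently_le_mul_count hK
  refine le_csInf ⟨2, zero_le_two,
    (hs.comp_strictMono (Nat.nth_strictMono hp)).dimExprSup_two⟩ ?_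
  rintro τ ⟨hτ0, hτ⟩
  by_contra! hlt
  have hδ : 0 < dimExprInf s τ := pos_iff_ne_zero.2 fun h0 =>
    hlt.not_ge (csInf_le ⟨0, fun _ h => h.1⟩ ⟨hτ0, h0⟩)
  obtain ⟨η, hη0, hηδ⟩ := exists_between hδ
  have hcount : Tendsto (fun n => Nat.count p n - 1) atTop atTop :=
    (tendsto_sub_atTop_nat 1).comp <| tendsto_atTop_atTop_of_monotone (Nat.count_monotone p)
      fun b => ⟨Nat.nth p b, (Nat.count_nth_of_infinite hp b).ge⟩
  have hfreq : ∃ᶠ i : ℕ in atTop,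
      η / (2 * K) ≤ ((i : ℝ≥0∞) + 1) / ((s ∘ Nat.nth p) i : ℝ≥0∞) ^ τ :=
    hcount.frequently_map _ (fun n ⟨hnK, hnη, hn⟩ => ENNReal.div_le_of_le_mul'
      (hnη.le.trans (add_one_div_rpow_le_mul_count hs.1 hn hnK hτ0)))
      (hK.and_eventually ((eventually_lt_of_lt_liminf hηδ).and (eventually_ge_atTop 1)))
  have := le_limsup_of_frequently_le' hfreq
  rw [← dimExprSup, hτ] at this
  exact (ENNReal.div_pos hη0.ne' (by finiteness)).not_ge this

end Sequences

lemma isEntGenSeq_of_mul_le {X : Type*} [MeasurableSpace X] (μ : Measure X)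
    [IsProbabilityMeasure μ] {T : X → X} (hT : Measurable T) {ι : Type*} [Fintype ι]
    {P : ι → Set X} (hP : IsPartition P) {f : ℕ → ℕ} (hf : IsPosSeq f) {d : ℝ} (hd : 0 < d)
    (h : ∀ n : ℕ, n * d ≤ seqJoinEnt μ T P f n) : IsEntGenSeq μ T P f := by
  have hR : ∀ j, IsPartition fun a => T^[f j] ⁻¹' P a := fun j => hP.preimage (hT.iterate _)
  have hbdd : ∀ n : ℕ, seqJoinEnt μ T P f n / n ≤ log (Fintype.card ι) := fun n => by
    have := joinEnt_le_card_mul_log μ hR (range n)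
    rw [card_range, mul_comm] at this
    exact div_le_of_le_mul₀ n.cast_nonneg (log_natCast_nonneg _) this
  refine ⟨hf, hd.trans_le (le_liminf_of_le (isCoboundedUnder_ge_of_le atTop hbdd)
    ((eventually_gt_atTop 0).mono fun n hn => ?_))⟩
  exact (le_div_iff₀ (Nat.cast_pos.2 hn)).2 (by linarith [h n])

/-- **Fact A.** If `0 < τ < D̲^p_μ(T,α)` then there are an increasing
sequence `F = {f 0 < f 1 < ⋯}` of positive integers and `d > 0` with `D̄(F) ≥ τ` and
`H_μ(⋁_{i=m₁}^{m₂} T^{-f i} α) ≥ (m₂+1-m₁)·d` for all `m₁ ≤ m₂`; in particular `F`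
is an entropy generating sequence of `α`. -/
theorem exists_entGenSeq_of_lt_lowerPosDimPart {X : Type*} [MeasurableSpace X]
    (μ : Measure X) [IsProbabilityMeasure μ] (T : X → X) (hT : MeasurePreserving T μ μ)
    {k : ℕ} (P : Fin k → Set X) (hP : IsPartition P)
    (τ : ℝ) (hτ0 : 0 < τ) (hτ : τ < lowerPosDimPart μ T P) :
    ∃ (f : ℕ → ℕ) (d : ℝ), IsPosSeq f ∧ 0 < d ∧ τ ≤ upperDim f ∧
      (∀ m1 m2 : ℕ, m1 ≤ m2 →
        ((m2 - m1 + 1 : ℕ) : ℝ) * d ≤ finJoinEnt μ T P f (Finset.Icc m1 m2)) ∧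
      IsEntGenSeq μ T P f := by
  have hne : {d | ∃ s, IsPosEntSeq μ T P s ∧ d = lowerDim s}.Nonempty := by
    by_contra h
    rw [Set.not_nonempty_iff_eq_empty] at h
    rw [lowerPosDimPart, h, Real.sSup_empty] at hτ
    linarith
  obtain ⟨_, ⟨s, hs, rfl⟩, hτs⟩ := exists_lt_of_lt_csSup hne hτ
  set R : ℕ → Fin k → Set X := fun j a => T^[s j] ⁻¹' P a
  have hR : ∀ j, IsPartition (R j) := fun j => hP.preimage (hT.measurable.iterate _)
  obtain ⟨c, hc, hfreq⟩ := exists_frequently_mul_le_of_limsup_pos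
    (fun n => joinEnt_nonneg μ R (range n)) hs.2
  simp_rw [← sum_condEnt_range μ hR] at hfreq
  obtain ⟨K, hK⟩ := exists_frequently_le_mul_count
    (fun j => condEnt_le_log_card μ hR (hR j) (range j)) hc hfreq
  have hp := infinite_of_frequently_le_mul_count hK
  have hf := hs.1.comp_strictMono (Nat.nth_strictMono hp)
  have hblock (A : Finset ℕ) : A.card * (c / 2) ≤ finJoinEnt μ T P (s ∘ Nat.nth _) A :=
    card_mul_le_joinEnt_comp μ hR (Nat.nth_strictMono hp) (Nat.nth_mem_of_infinite hp) A
  refine ⟨_, c / 2, hf, half_pos hc, hτs.le.trans (lowerDim_le_upperDim_comp_nth hs.1 hK),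
    fun m1 m2 h12 => ?_, isEntGenSeq_of_mul_le μ hT.measurable hP hf (half_pos hc)
      fun n => by simpa [seqJoinEnt] using hblock (range n)⟩
  simpa [Nat.card_Icc, Nat.sub_add_comm h12] using hblock (Icc m1 m2)

end EntDim
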